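/- arXiv:1010.5153 — 2 statements merged into one kernel-verified Lean document; each statement's English description precedes it below -/
import Mathlib

section
/- Let {f_i} be a d-decaying system, fix s > 1/d, and choose k such that Σ_{i=k}^∞ λ_i^s ≤ 1, where λ_i = sup_x |f_i'(x)|. Then for every n ≥ 1, the sum over all words (a_1,...,a_n) with each a_j ≥ k of |f_{a_1}∘⋯∘f_{a_n}([0,1])|^s is at most 1. Consequently dim_H Λ_k ≤ s. -/
open Set Filter Topology MeasureTheory

/-- A `d`-decaying iterated function system on `[0,1]`: `C¹` maps `f_i` (for `i ≥ 1`)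
with derivative `f' i`, satisfying uniform eventual contraction, disjointness of the
open images, and polynomial decay `ξ_i ≍ i^{-d}` of the derivative bounds. -/
structure DDecaying (d : ℝ) where
  f : ℕ → ℝ → ℝ
  f' : ℕ → ℝ → ℝ
  ξ : ℕ → ℝ
  lam : ℕ → ℝ
  hd : 1 < d
  maps : ∀ i : ℕ, 1 ≤ i → MapsTo (f i) (Icc (0:ℝ) 1) (Icc (0:ℝ) 1)
  hderiv : ∀ i : ℕ, 1 ≤ i → ∀ x ∈ Icc (0:ℝ) 1, HasDerivAt (f i) (f' i x) x
  contract : ∃ m : ℕ, 1 ≤ m ∧ ∃ A : ℝ, 0 < A ∧ A < 1 ∧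
    ∀ a : Fin m → ℕ, (∀ j, 1 ≤ a j) → ∀ x ∈ Icc (0:ℝ) 1,
      0 < |deriv ((List.ofFn fun j => f (a j)).foldr (· ∘ ·) id) x| ∧
        |deriv ((List.ofFn fun j => f (a j)).foldr (· ∘ ·) id) x| ≤ A
  derivBounds : ∀ i : ℕ, 1 ≤ i → ∀ x ∈ Icc (0:ℝ) 1, ξ i ≤ |f' i x| ∧ |f' i x| ≤ lam i
  decay : ∀ ε : ℝ, 0 < ε → ∃ C₁ : ℝ, 0 < C₁ ∧ ∃ C₂ : ℝ, 0 < C₂ ∧ ∀ i : ℕ, 1 ≤ i →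
    C₁ / (i : ℝ) ^ (d + ε) ≤ ξ i ∧ lam i ≤ C₂ / (i : ℝ) ^ (d - ε)
  disj : ∀ i j, 1 ≤ i → 1 ≤ j → i ≠ j →
    Disjoint (f i '' Ioo (0:ℝ) 1) (f j '' Ioo (0:ℝ) 1)

variable {d : ℝ}

/-- The composition `f_{a 0} ∘ f_{a 1} ∘ ⋯ ∘ f_{a (n-1)}`. -/
def DDecaying.comp (S : DDecaying d) (a : ℕ → ℕ) (n : ℕ) : ℝ → ℝ :=
  ((List.range n).map fun k => S.f (a k)).foldr (· ∘ ·) id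

/-- The approximating sequence `n ↦ f_{a 0} ∘ ⋯ ∘ f_{a (n-1)} (1)` for the projection `Π`. -/
def DDecaying.projSeq (S : DDecaying d) (a : ℕ → ℕ) (n : ℕ) : ℝ :=
  S.comp a n 1

/-- The `n`-th level cylinder determined by the digits `a 0, …, a (n-1)`. -/
def DDecaying.cyl (S : DDecaying d) (a : ℕ → ℕ) (n : ℕ) : Set ℝ :=
  S.comp a n '' Icc (0:ℝ) 1

/-- The attractor of the subsystem `{f_i}_{i ≥ k}`. -/
def DDecaying.attractor (S : DDecaying d) (k : ℕ) : Set ℝ :=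
  {x | ∃ a : ℕ → ℕ, (∀ n, k ≤ a n) ∧ Tendsto (S.projSeq a) atTop (𝓝 x)}

/-- The set `X_Φ = Π{a : a_{n+1} > Φ(a_n)}` of points all of whose digits grow at rate `Φ`. -/
def DDecaying.XPhi (S : DDecaying d) (Φ : ℕ → ℝ) : Set ℝ :=
  {x | ∃ a : ℕ → ℕ, (∀ n, 1 ≤ a n) ∧ (∀ n, Φ (a n) < (a (n + 1) : ℝ)) ∧
    Tendsto (S.projSeq a) atTop (𝓝 x)}

/-!
By the mean value theorem each `f_i` is `λ_i`-Lipschitz on `[0,1]`, so the cylinder of a word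
`w` has diameter at most `∏ λ_{w_j}`, and summing `s`-th powers over all words of length `n` gives
at most `(∑_{i ≥ k} λ_i ^ s) ^ n ≤ 1`. Since every `λ_i` is positive, the condition
`∑ λ_i ^ s ≤ 1` bounds all `λ_i ^ s` by one `q < 1`; hence the `n`-cylinders, which cover `Λ_k`,
have diameters tending to `0` uniformly, so `μH[s] Λ_k ≤ 1` and `dim_H Λ_k ≤ s`.
-/

open scoped ENNReal NNReal

theorem List.foldr_comp_append {α : Type*} (L₁ L₂ : List (α → α)) :
    (L₁ ++ L₂).foldr (· ∘ ·) id = L₁.foldr (· ∘ ·) id ∘ L₂.foldr (· ∘ ·) id := by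
  induction L₁ with
  | nil => rfl
  | cons g L ih => simp only [List.cons_append, List.foldr_cons, ih]; rfl

theorem Set.MapsTo.foldr_comp_ofFn {α : Type*} {s : Set α} :
    ∀ {n : ℕ} {g : Fin n → α → α}, (∀ j, MapsTo (g j) s s) →
      MapsTo ((List.ofFn g).foldr (· ∘ ·) id) s s
  | 0, _, _ => mapsTo_id s
  | _ + 1, g, hg => by
    rw [List.ofFn_succ, List.foldr_cons]
    exact (hg 0).comp (MapsTo.foldr_comp_ofFn fun j => hg j.succ)

theorem LipschitzOnWith.foldr_comp_ofFn {α : Type*} [PseudoEMetricSpace α] {s : Set α} :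
    ∀ {n : ℕ} {g : Fin n → α → α} {K : Fin n → ℝ≥0}, (∀ j, MapsTo (g j) s s) →
      (∀ j, LipschitzOnWith (K j) (g j) s) →
      LipschitzOnWith (∏ j, K j) ((List.ofFn g).foldr (· ∘ ·) id) s
  | 0, _, _, _, _ => by simpa using LipschitzWith.id.lipschitzOnWith
  | _ + 1, g, K, hmaps, hg => by
    rw [List.ofFn_succ, List.foldr_cons, Fin.prod_univ_succ]
    exact (hg 0).comp
      (LipschitzOnWith.foldr_comp_ofFn (fun j => hmaps j.succ) fun j => hg j.succ)
      (MapsTo.foldr_comp_ofFn fun j => hmaps j.succ)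

theorem ENNReal.tsum_fin_pi_prod {β : Type*} (g : β → ℝ≥0∞) :
    ∀ n : ℕ, ∑' b : Fin n → β, ∏ j, g (b j) = (∑' c, g c) ^ n
  | 0 => by simp
  | n + 1 => by
    rw [← (Fin.consEquiv fun _ => β).tsum_eq, ENNReal.tsum_prod', pow_succ',
      ← tsum_fin_pi_prod g n, ← ENNReal.tsum_mul_right]
    simp [Fin.consEquiv, Fin.prod_univ_succ, ENNReal.tsum_mul_left]

theorem ENNReal.tsum_subtype_fin_pi_prod {β : Type*} (p : β → Prop) (g : β → ℝ≥0∞) (n : ℕ) :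
    ∑' a : {a : Fin n → β // ∀ j, p (a j)}, ∏ j, g (a.1 j) = (∑' c : {c // p c}, g c) ^ n := by
  rw [← ENNReal.tsum_fin_pi_prod, ← Equiv.subtypePiEquivPi.symm.tsum_eq]
  rfl

theorem exists_lt_one_forall_le_of_tsum_le_one {ι : Type*} {f : ι → ℝ} (hf : Summable f)
    (hnonneg : ∀ i, 0 ≤ f i) (hle : ∑' i, f i ≤ 1) {i₀ i₁ : ι} (hne : i₀ ≠ i₁)
    (h₀ : 0 < f i₀) (h₁ : 0 < f i₁) : ∃ q < 1, ∀ i, f i ≤ q := by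
  classical
  have pair : ∀ {i j}, i ≠ j → f i + f j ≤ 1 := fun h =>
    (Finset.sum_pair h).symm.le.trans ((hf.sum_le_tsum _ fun k _ => hnonneg k).trans hle)
  refine ⟨1 - min (f i₀) (f i₁), by linarith [lt_min h₀ h₁], fun i => ?_⟩
  by_cases hi : i = i₀
  · subst hi
    linarith [pair hne, min_le_right (f i) (f i₁)]
  · linarith [pair hi, min_le_left (f i₀) (f i₁)]

theorem tsum_diam_rpow_le_of_tsum_ediam_rpow_le {X ι : Type*} [PseudoMetricSpace X]
    {t : ι → Set X} {s C : ℝ} (hC : 0 ≤ C)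
    (h : ∑' i, Metric.ediam (t i) ^ s ≤ ENNReal.ofReal C) :
    ∑' i, Metric.diam (t i) ^ s ≤ C := by
  have hfin : ∀ i, Metric.ediam (t i) ^ s ≠ ∞ := fun i =>
    ne_top_of_le_ne_top ENNReal.ofReal_ne_top ((ENNReal.le_tsum i).trans h)
  simp_rw [Metric.diam, ENNReal.toReal_rpow, ← ENNReal.tsum_toReal_eq hfin]
  exact ENNReal.toReal_le_of_le_ofReal hC h

theorem dimH_le_of_tsum_ediam_rpow_le {X : Type*} [EMetricSpace X] {ι : ℕ → Type*}
    [∀ n, Countable (ι n)] {E : Set X} {s : ℝ} (hs : 0 ≤ s) (t : ∀ n, ι n → Set X)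
    (hcover : ∀ n, E ⊆ ⋃ i, t n i) (r : ℕ → ℝ≥0∞) (hr : Tendsto r atTop (𝓝 0))
    (hdiam : ∀ n i, Metric.ediam (t n i) ≤ r n) {C : ℝ≥0∞} (hC : C ≠ ∞)
    (hsum : ∀ n, ∑' i, Metric.ediam (t n i) ^ s ≤ C) : dimH E ≤ ENNReal.ofReal s := by
  borelize X
  have hμ : μH[s] E ≤ C :=
    (Measure.hausdorffMeasure_le_liminf_tsum s E r hr t (.of_forall hdiam)
      (.of_forall hcover)).trans (liminf_le_of_frequently_le' (.of_forall hsum))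
  refine dimH_le_of_hausdorffMeasure_ne_top (d := s.toNNReal) ?_
  rw [Real.coe_toNNReal s hs]
  exact ne_top_of_le_ne_top hC hμ

namespace DDecaying

theorem pos_of_one_div_lt (S : DDecaying d) {s : ℝ} (hs : 1 / d < s) : 0 < s :=
  (one_div_pos.2 (one_pos.trans S.hd)).trans hs

variable (S : DDecaying d)

theorem lam_pos {i : ℕ} (hi : 1 ≤ i) : 0 < S.lam i := by
  obtain ⟨C₁, hC₁, _, _, hbd⟩ := S.decay 1 one_pos
  have h0 : (0 : ℝ) ∈ Icc (0 : ℝ) 1 := left_mem_Icc.2 zero_le_one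
  have hi' : (0 : ℝ) < i := by exact_mod_cast hi
  calc 0 < C₁ / (i : ℝ) ^ (d + 1) := by positivity
    _ ≤ S.ξ i := (hbd i hi).1
    _ ≤ |S.f' i 0| := (S.derivBounds i hi 0 h0).1
    _ ≤ S.lam i := (S.derivBounds i hi 0 h0).2

theorem summable_lam_rpow {s : ℝ} (hs : 1 / d < s) : Summable fun i => S.lam i ^ s := by
  have hs0 : 0 < s := S.pos_of_one_div_lt hs
  have hsd : 1 < s * d := by rwa [div_lt_iff₀ (one_pos.trans S.hd)] at hs
  -- `ε` is chosen so that `λ_i ^ s ≲ i ^ (-(s d + 1) / 2)`, a convergent `p`-series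
  set ε := (s * d - 1) / (2 * s)
  obtain ⟨_, _, C, hC, hbd⟩ := S.decay ε (div_pos (by linarith) (by positivity))
  set p := s * (d - ε)
  have hp : 1 < p := by
    have : p = (s * d + 1) / 2 := by simp only [p, ε]; field_simp; ring
    linarith
  rw [← summable_nat_add_iff 1]
  refine .of_nonneg_of_le (fun i => (Real.rpow_nonneg (S.lam_pos (by omega)).le s)) (fun i => ?_)
    (((summable_nat_add_iff 1).2 (Real.summable_nat_rpow_inv.2 hp)).mul_left (C ^ s))
  have hi : (0 : ℝ) < (i + 1 : ℕ) := by positivity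
  calc S.lam (i + 1) ^ s ≤ (C / ((i + 1 : ℕ) : ℝ) ^ (d - ε)) ^ s :=
        Real.rpow_le_rpow (S.lam_pos (by omega)).le (hbd (i + 1) (by omega)).2 hs0.le
    _ = C ^ s * (((i + 1 : ℕ) : ℝ) ^ p)⁻¹ := by
        rw [Real.div_rpow hC.le (by positivity), ← Real.rpow_mul hi.le, mul_comm _ s,
          div_eq_mul_inv]

theorem lipschitzOnWith_f {i : ℕ} (hi : 1 ≤ i) :
    LipschitzOnWith (S.lam i).toNNReal (S.f i) (Icc 0 1) :=
  (convex_Icc 0 1).lipschitzOnWith_of_nnnorm_hasDerivWithin_le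
    (fun x hx => (S.hderiv i hi x hx).hasDerivWithinAt) fun x hx =>
      (Real.le_toNNReal_iff_coe_le (S.lam_pos hi).le).2 (S.derivBounds i hi x hx).2

variable {n : ℕ}

def wordMap (w : Fin n → ℕ) : ℝ → ℝ := (List.ofFn fun j => S.f (w j)).foldr (· ∘ ·) id

variable {S} {w : Fin n → ℕ}

theorem mapsTo_wordMap (hw : ∀ j, 1 ≤ w j) : MapsTo (S.wordMap w) (Icc 0 1) (Icc 0 1) :=
  MapsTo.foldr_comp_ofFn fun j => S.maps _ (hw j)

theorem lipschitzOnWith_wordMap (hw : ∀ j, 1 ≤ w j) :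
    LipschitzOnWith (∏ j, (S.lam (w j)).toNNReal) (S.wordMap w) (Icc 0 1) :=
  LipschitzOnWith.foldr_comp_ofFn (fun j => S.maps _ (hw j)) fun j => S.lipschitzOnWith_f (hw j)

theorem ediam_image_wordMap_rpow_le (hw : ∀ j, 1 ≤ w j) {s : ℝ} (hs : 0 ≤ s) :
    Metric.ediam (S.wordMap w '' Icc 0 1) ^ s ≤ ∏ j, ENNReal.ofReal (S.lam (w j) ^ s) := by
  have hdiam := (lipschitzOnWith_wordMap (S := S) hw).holderOnWith.ediam_image_le_of_le
    (Real.ediam_Icc 0 1).le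
  simp only [sub_zero, ENNReal.ofReal_one, NNReal.coe_one, ENNReal.one_rpow, mul_one,
    ENNReal.ofNNReal_finsetProd] at hdiam
  calc Metric.ediam (S.wordMap w '' Icc 0 1) ^ s ≤ (∏ j, ENNReal.ofReal (S.lam (w j))) ^ s :=
        ENNReal.rpow_le_rpow hdiam hs
    _ = ∏ j, ENNReal.ofReal (S.lam (w j) ^ s) := by
        rw [← ENNReal.prod_rpow_of_nonneg hs]
        exact Finset.prod_congr rfl fun j _ =>
          ENNReal.ofReal_rpow_of_nonneg (S.lam_pos (hw j)).le hs

theorem comp_eq_wordMap (a : ℕ → ℕ) (n : ℕ) :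
    S.comp a n = S.wordMap fun j : Fin n => a j := by
  rw [comp, wordMap]
  congr 1
  exact List.ext_getElem (by simp) (by simp)

theorem comp_add (a : ℕ → ℕ) (n p : ℕ) :
    S.comp a (n + p) = S.comp a n ∘ S.comp (fun j => a (n + j)) p := by
  simp only [comp, List.range_add, List.map_append, List.map_map, List.foldr_comp_append]
  rfl

theorem mem_cyl_of_tendsto_projSeq {a : ℕ → ℕ} (ha : ∀ n, 1 ≤ a n) {x : ℝ}
    (hx : Tendsto (S.projSeq a) atTop (𝓝 x)) (n : ℕ) : x ∈ S.cyl a n := by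
  have hclosed : IsClosed (S.cyl a n) := by
    rw [cyl, comp_eq_wordMap]
    exact (isCompact_Icc.image_of_continuousOn
      (lipschitzOnWith_wordMap fun j => ha j).continuousOn).isClosed
  refine hclosed.mem_of_tendsto hx (eventually_atTop.2 ⟨n, fun p hp => ?_⟩)
  obtain ⟨p, rfl⟩ := Nat.exists_eq_add_of_le hp
  rw [projSeq, comp_add, Function.comp_apply]
  refine mem_image_of_mem _ ?_
  rw [comp_eq_wordMap]
  exact mapsTo_wordMap (fun j => ha _) (right_mem_Icc.2 zero_le_one)

theorem attractor_subset_iUnion_image_wordMap {k : ℕ} (hk : 1 ≤ k) (n : ℕ) :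
    S.attractor k ⊆
      ⋃ a : {a : Fin n → ℕ // ∀ j, k ≤ a j}, S.wordMap a.1 '' Icc 0 1 := by
  rintro x ⟨a, ha, hx⟩
  refine mem_iUnion.2 ⟨⟨fun j => a j, fun j => ha j⟩, ?_⟩
  rw [← comp_eq_wordMap]
  exact mem_cyl_of_tendsto_projSeq (fun j => hk.trans (ha j)) hx n

variable (S)

theorem tsum_ediam_image_wordMap_rpow_le_one {s : ℝ} (hs : 1 / d < s) {k : ℕ} (hk : 1 ≤ k)
    (hsum : ∑' i : {i : ℕ // k ≤ i}, S.lam i ^ s ≤ 1) (n : ℕ) :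
    ∑' a : {a : Fin n → ℕ // ∀ j, k ≤ a j}, Metric.ediam (S.wordMap a.1 '' Icc 0 1) ^ s
      ≤ 1 := by
  refine (ENNReal.tsum_le_tsum fun a =>
    ediam_image_wordMap_rpow_le (fun j => hk.trans (a.2 j)) (S.pos_of_one_div_lt hs).le).trans ?_
  rw [ENNReal.tsum_subtype_fin_pi_prod (k ≤ ·) (fun i => ENNReal.ofReal (S.lam i ^ s)),
    ← ENNReal.ofReal_tsum_of_nonneg (fun i => Real.rpow_nonneg (S.lam_pos (hk.trans i.2)).le s)
      ((S.summable_lam_rpow hs).subtype _)]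
  exact pow_le_one' (ENNReal.ofReal_le_one.2 hsum) n

theorem exists_tendsto_zero_forall_ediam_image_wordMap_le {s : ℝ} (hs : 1 / d < s) {k : ℕ}
    (hk : 1 ≤ k) (hsum : ∑' i : {i : ℕ // k ≤ i}, S.lam i ^ s ≤ 1) :
    ∃ r : ℕ → ℝ≥0∞, Tendsto r atTop (𝓝 0) ∧
      ∀ n (a : {a : Fin n → ℕ // ∀ j, k ≤ a j}),
        Metric.ediam (S.wordMap a.1 '' Icc 0 1) ≤ r n := by
  have hs0 : 0 < s := S.pos_of_one_div_lt hs
  have hlam : ∀ i : {i : ℕ // k ≤ i}, 0 < S.lam i ^ s := fun i =>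
    Real.rpow_pos_of_pos (S.lam_pos (hk.trans i.2)) s
  -- all `λ_i` are positive, so two of them already keep every `λ_i ^ s` uniformly below `1`
  obtain ⟨q, hq1, hq⟩ := exists_lt_one_forall_le_of_tsum_le_one
    ((S.summable_lam_rpow hs).subtype {i | k ≤ i}) (fun i => (hlam i).le) hsum
    (i₀ := ⟨k, le_rfl⟩) (i₁ := ⟨k + 1, k.le_succ⟩) (by simp [Subtype.ext_iff])
    (hlam _) (hlam _)
  refine ⟨fun n => (ENNReal.ofReal q ^ n) ^ s⁻¹, ?_, fun n a => ?_⟩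
  · have := (ENNReal.continuous_rpow_const (y := s⁻¹).tendsto 0).comp
      (ENNReal.tendsto_pow_atTop_nhds_zero_iff.2 (ENNReal.ofReal_lt_one.2 hq1))
    rwa [ENNReal.zero_rpow_of_pos (inv_pos.2 hs0)] at this
  · refine (ENNReal.le_rpow_inv_iff hs0).2
      ((ediam_image_wordMap_rpow_le (fun j => hk.trans (a.2 j)) hs0.le).trans ?_)
    simpa using Finset.prod_le_pow_card Finset.univ _ _ fun j _ =>
      ENNReal.ofReal_le_ofReal (hq ⟨a.1 j, a.2 j⟩)

end DDecaying

/-- If `s > 1/d` and `k` is such that `∑_{i ≥ k} λ_i^s ≤ 1`, then for every `n ≥ 1` the sum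
over all words `(a_1, …, a_n)` with digits `≥ k` of `|f_{a_1}∘⋯∘f_{a_n}([0,1])|^s` is at
most `1`; consequently `dim_H Λ_k ≤ s`. -/
theorem dimH_attractor_upper (d : ℝ) (S : DDecaying d) (s : ℝ) (hs : 1 / d < s)
    (k : ℕ) (hk : 1 ≤ k)
    (hsum : ∑' i : {i : ℕ // k ≤ i}, S.lam i ^ s ≤ 1) :
    (∀ n : ℕ, 1 ≤ n →
      ∑' a : {a : Fin n → ℕ // ∀ j, k ≤ a j},
        Metric.diam (((List.ofFn fun j => S.f (a.1 j)).foldr (· ∘ ·) id) '' Icc (0:ℝ) 1) ^ s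
          ≤ 1) ∧
    dimH (S.attractor k) ≤ ENNReal.ofReal s := by
  have hwords := S.tsum_ediam_image_wordMap_rpow_le_one hs hk hsum
  obtain ⟨r, hr, hdiam⟩ := S.exists_tendsto_zero_forall_ediam_image_wordMap_le hs hk hsum
  refine ⟨fun n _ => tsum_diam_rpow_le_of_tsum_ediam_rpow_le zero_le_one ?_,
    dimH_le_of_tsum_ediam_rpow_le (S.pos_of_one_div_lt hs).le _
      (DDecaying.attractor_subset_iUnion_image_wordMap hk) r hr hdiam ENNReal.one_ne_top hwords⟩
  rw [ENNReal.ofReal_one]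
  exact hwords n
end

section
/- Let {f_i} be a d-decaying system and for s < 1/d choose m, k with Σ_{i=k+1}^m ξ_i^s ≥ 1, where ξ_i = inf_x |f_i'(x)|. Then the attractor Λ_{k,m} of the finite iterated function system {f_k, ..., f_m} satisfies dim_H Λ_{k,m} ≥ s_m, where s_m solves Σ_{i=k+1}^m ξ_i^{s_m} = 1; in particular dim_H Λ_k ≥ 1/d for every k. -/
open Set Filter Topology MeasureTheory

variable {d : ℝ}

/-!
Mass distribution principle. Weight each letter `i` of the alphabet by `ξ_i ^ s_m`; these weights
sum to one, so their infinite product is a probability measure on codings, which the coding map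
carries onto `Λ_{k,m}`. Every coding has a prefix `w` with `ξ_w < r ≤ ξ_{w⁻}` (`w⁻` drops the last
letter), and these *stopping words* are pairwise incomparable. Their cylinders are intervals of
length at least `r · min ξ_i` which, by the disjointness of the open images, meet only in finitely
many points; so boundedly many of them meet a ball of radius `r`, each of mass
`ξ_w ^ s_m < r ^ s_m`. Balls thus have mass `O(r ^ s_m)`, which forces `dim_H Λ_{k,m} ≥ s_m`.

For `q < 1/d`, the decay `ξ_i ≥ C i^{-(d+ε)}` with `(d + ε) q = 1` gives `ξ_i ^ q ≥ C^q / i`, so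
`∑_{i ≥ k} ξ_i ^ q` diverges; a finite window of it exceeds `1`, and the exponent solving
`∑ ξ_i ^ s = 1` on that window is at least `q`.
-/

open scoped ENNReal

theorem le_mul_hausdorffMeasure_of_measure_preimage_le {Ω X : Type*} [MeasurableSpace Ω]
    [EMetricSpace X] [MeasurableSpace X] [BorelSpace X] (ν : Measure Ω) (π : Ω → X) {s : ℝ}
    {C : ℝ≥0∞} (hC : C ≠ ∞) (hC₀ : C ≠ 0) {r : ℝ≥0∞} (hr : 0 < r)
    (h : ∀ U : Set X, Metric.ediam U ≤ r → ν (π ⁻¹' U) ≤ C * Metric.ediam U ^ s) (E : Set X) :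
    ν (π ⁻¹' E) ≤ C * μH[s] E := by
  have hle := OuterMeasure.le_mkMetric (C • fun t => t ^ s)
    (OuterMeasure.map π ν.toOuterMeasure) r hr h
  rw [OuterMeasure.mkMetric_smul _ hC hC₀] at hle
  simpa [Measure.hausdorffMeasure, OuterMeasure.coe_mkMetric] using hle E

theorem measure_preimage_le_ediam_rpow_of_closedBall {Ω X : Type*} [MeasurableSpace Ω]
    [PseudoMetricSpace X] (ν : Measure Ω) (π : Ω → X) {s C R : ℝ} (hs : 0 < s) (hR : 0 < R)
    (h : ∀ x r, 0 < r → r ≤ R → ν (π ⁻¹' Metric.closedBall x r) ≤ ENNReal.ofReal (C * r ^ s))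
    {U : Set X} (hU : Metric.ediam U ≤ ENNReal.ofReal R) :
    ν (π ⁻¹' U) ≤ ENNReal.ofReal C * Metric.ediam U ^ s := by
  rcases U.eq_empty_or_nonempty with rfl | ⟨x, hx⟩
  · simp
  have hD : Metric.ediam U ≠ ∞ := ne_top_of_le_ne_top ENNReal.ofReal_ne_top hU
  have hDR : Metric.diam U ≤ R := ENNReal.toReal_le_of_le_ofReal hR.le hU
  have hUball : ∀ r, Metric.diam U ≤ r → U ⊆ Metric.closedBall x r := fun r hr y hy =>
    (Metric.dist_le_diam_of_mem (Metric.isBounded_iff_ediam_ne_top.2 hD) hy hx).trans hr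
  rcases (Metric.diam_nonneg (s := U)).eq_or_lt with hD0 | hD0
  · have h0 : Metric.ediam U = 0 := by
      rw [Metric.diam, eq_comm, ENNReal.toReal_eq_zero_iff] at hD0
      exact hD0.resolve_right hD
    rw [h0, ENNReal.zero_rpow_of_pos hs, mul_zero]
    have hlim : Tendsto (fun r : ℝ => ENNReal.ofReal (C * r ^ s)) (𝓝[>] 0) (𝓝 0) := by
      have := ((Real.continuousAt_rpow_const 0 s (.inr hs.le)).tendsto.const_mul C).mono_left
        (nhdsWithin_le_nhds (s := Ioi 0))
      simpa [Real.zero_rpow hs.ne'] using ENNReal.tendsto_ofReal this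
    refine ge_of_tendsto hlim ?_
    filter_upwards [Ioc_mem_nhdsGT hR] with r hr
    exact (measure_mono (preimage_mono (hUball r (hD0 ▸ hr.1.le)))).trans (h x r hr.1 hr.2)
  · calc ν (π ⁻¹' U) ≤ ENNReal.ofReal (C * Metric.diam U ^ s) :=
          (measure_mono (preimage_mono (hUball _ le_rfl))).trans (h x _ hD0 hDR)
      _ ≤ ENNReal.ofReal C * Metric.ediam U ^ s := by
          rw [ENNReal.ofReal_mul' (by positivity), ← ENNReal.ofReal_rpow_of_pos hD0, Metric.diam,
            ENNReal.ofReal_toReal hD]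

theorem ofReal_le_dimH_of_measure_preimage_closedBall_le {Ω X : Type*} [MeasurableSpace Ω]
    [MetricSpace X] [MeasurableSpace X] [BorelSpace X] (ν : Measure Ω) [NeZero ν] (π : Ω → X)
    {E : Set X} (hπ : ∀ ω, π ω ∈ E) {s C R : ℝ} (hs : 0 < s) (hR : 0 < R) (hC : 0 < C)
    (h : ∀ x r, 0 < r → r ≤ R → ν (π ⁻¹' Metric.closedBall x r) ≤ ENNReal.ofReal (C * r ^ s)) :
    ENNReal.ofReal s ≤ dimH E := by
  have hle := le_mul_hausdorffMeasure_of_measure_preimage_le ν π ENNReal.ofReal_ne_top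
    (ENNReal.ofReal_pos.2 hC).ne' (ENNReal.ofReal_pos.2 hR)
    (fun U hU => measure_preimage_le_ediam_rpow_of_closedBall ν π hs hR h hU) E
  rw [show π ⁻¹' E = univ from eq_univ_of_forall hπ] at hle
  have hE : μH[(s.toNNReal : ℝ)] E ≠ 0 := by
    rw [Real.coe_toNNReal _ hs.le]
    rintro h0
    rw [h0, mul_zero, nonpos_iff_eq_zero, Measure.measure_univ_eq_zero] at hle
    exact NeZero.ne ν hle
  exact le_dimH_of_hausdorffMeasure_ne_zero hE

theorem infinitePi_setOf_forall_lt_eq {α : Type*} [MeasurableSpace α]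
    [MeasurableSingletonClass α] (ρ : Measure α) [IsProbabilityMeasure ρ] (a : ℕ → α) (n : ℕ) :
    Measure.infinitePi (fun _ : ℕ => ρ) {b | ∀ j < n, b j = a j} =
      ∏ j ∈ Finset.range n, ρ {a j} := by
  have : {b : ℕ → α | ∀ j < n, b j = a j} = Set.pi (Finset.range n : Set ℕ) fun j => {a j} := by
    ext b; simp
  rw [this]
  exact Measure.infinitePi_pi _ fun _ _ => measurableSet_singleton _

theorem tsum_ofReal_le_of_pairwise_aedisjoint {ι : Type*} {J : ι → Set ℝ} {x r δ : ℝ}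
    (hδ : 0 ≤ δ) (hJ : ∀ i, ∃ α β, J i = Icc α β ∧ δ ≤ β - α)
    (hmeet : ∀ i, (J i ∩ Metric.closedBall x r).Nonempty)
    (hdisj : Pairwise (Function.onFun (AEDisjoint volume) J)) :
    ∑' _ : ι, ENNReal.ofReal δ ≤ ENNReal.ofReal (2 * (r + δ)) := by
  have hK : ∀ i, ∃ c, Icc c (c + δ) ⊆ J i ∩ Metric.closedBall x (r + δ) := by
    intro i
    obtain ⟨α, β, hJi, hαβ⟩ := hJ i
    obtain ⟨y, hyJ, hyx⟩ := hmeet i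
    rw [hJi] at hyJ ⊢
    rw [Metric.mem_closedBall, Real.dist_eq, abs_le] at hyx
    refine ⟨min y (β - δ), fun z hz => ⟨⟨?_, ?_⟩, ?_⟩⟩
    · exact (le_min hyJ.1 (by linarith)).trans hz.1
    · linarith [hz.2, min_le_right y (β - δ)]
    · rw [Metric.mem_closedBall, Real.dist_eq, abs_le]
      have hlow : y - δ ≤ min y (β - δ) := le_min (by linarith) (by linarith [hyJ.2])
      constructor <;> linarith [hz.1, hz.2, min_le_left y (β - δ)]
  choose c hc using hK
  calc ∑' _ : ι, ENNReal.ofReal δ = ∑' i, volume (Icc (c i) (c i + δ)) := by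
        simp [Real.volume_Icc]
    _ ≤ volume (⋃ i, Icc (c i) (c i + δ)) :=
        tsum_meas_le_meas_iUnion_of_disjoint₀ volume (fun _ => measurableSet_Icc.nullMeasurableSet)
          fun i j hij => (hdisj hij).mono ((hc i).trans inter_subset_left)
            ((hc j).trans inter_subset_left)
    _ ≤ volume (Metric.closedBall x (r + δ)) :=
        measure_mono (iUnion_subset fun i => (hc i).trans inter_subset_right)
    _ = ENNReal.ofReal (2 * (r + δ)) := Real.volume_closedBall _ _

theorem List.exists_eq_append_cons_of_not_prefix {α : Type*} :
    ∀ {w w' : List α}, ¬ w <+: w' → ¬ w' <+: w →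
      ∃ (u : List α) (i j : α) (v v' : List α), i ≠ j ∧ w = u ++ i :: v ∧ w' = u ++ j :: v'
  | [], _, h, _ => absurd List.nil_prefix h
  | _, [], _, h' => absurd List.nil_prefix h'
  | i :: w, j :: w', h, h' => by
    by_cases hij : i = j
    · subst hij
      obtain ⟨u, k, l, v, v', hkl, rfl, rfl⟩ :=
        exists_eq_append_cons_of_not_prefix (w := w) (w' := w')
          (fun hp => h (List.cons_prefix_cons.2 ⟨rfl, hp⟩))
          (fun hp => h' (List.cons_prefix_cons.2 ⟨rfl, hp⟩))
      exact ⟨i :: u, k, l, v, v', hkl, rfl, rfl⟩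
    · exact ⟨[], i, j, w, w', hij, rfl, rfl⟩

namespace DDecaying

variable (S : DDecaying d)

def compWord (w : List ℕ) : ℝ → ℝ := (w.map S.f).foldr (· ∘ ·) id

def xiWord (w : List ℕ) : ℝ := (w.map S.ξ).prod

@[simp] theorem compWord_nil : S.compWord [] = id := rfl

@[simp] theorem compWord_cons (i : ℕ) (w : List ℕ) :
    S.compWord (i :: w) = S.f i ∘ S.compWord w := rfl

theorem compWord_append (w₁ w₂ : List ℕ) :
    S.compWord (w₁ ++ w₂) = S.compWord w₁ ∘ S.compWord w₂ := by
  induction w₁ with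
  | nil => rfl
  | cons i w ih => simp [ih, Function.comp_assoc]

@[simp] theorem xiWord_nil : S.xiWord [] = 1 := rfl

@[simp] theorem xiWord_cons (i : ℕ) (w : List ℕ) : S.xiWord (i :: w) = S.ξ i * S.xiWord w := by
  simp [xiWord]

theorem xiWord_append (w₁ w₂ : List ℕ) : S.xiWord (w₁ ++ w₂) = S.xiWord w₁ * S.xiWord w₂ := by
  simp [xiWord]

theorem comp_eq_compWord (a : ℕ → ℕ) (n : ℕ) : S.comp a n = S.compWord ((List.range n).map a) := by
  rw [DDecaying.comp, compWord, List.map_map]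
  rfl

theorem xi_pos {i : ℕ} (hi : 1 ≤ i) : 0 < S.ξ i := by
  obtain ⟨C₁, hC₁, _, _, h⟩ := S.decay 1 one_pos
  have : (0 : ℝ) < (i : ℝ) ^ (d + 1) := Real.rpow_pos_of_pos (by exact_mod_cast hi) _
  exact (div_pos hC₁ this).trans_le (h i hi).1

theorem xiWord_pos {w : List ℕ} (hw : ∀ i ∈ w, 1 ≤ i) : 0 < S.xiWord w := by
  induction w with
  | nil => simp
  | cons i w ih =>
    rw [List.forall_mem_cons] at hw
    simpa using mul_pos (S.xi_pos hw.1) (ih hw.2)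

theorem mapsTo_compWord {w : List ℕ} (hw : ∀ i ∈ w, 1 ≤ i) :
    MapsTo (S.compWord w) (Icc 0 1) (Icc 0 1) := by
  induction w with
  | nil => exact mapsTo_id _
  | cons i w ih =>
    rw [List.forall_mem_cons] at hw
    exact (S.maps i hw.1).comp (ih hw.2)

theorem continuousOn_compWord {w : List ℕ} (hw : ∀ i ∈ w, 1 ≤ i) :
    ContinuousOn (S.compWord w) (Icc 0 1) := by
  induction w with
  | nil => exact continuousOn_id
  | cons i w ih =>
    rw [List.forall_mem_cons] at hw
    exact (HasDerivAt.continuousOn (S.hderiv i hw.1)).comp (ih hw.2) (S.mapsTo_compWord hw.2)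

theorem xi_mul_abs_sub_le {i : ℕ} (hi : 1 ≤ i) {u v : ℝ} (hu : u ∈ Icc (0 : ℝ) 1)
    (hv : v ∈ Icc (0 : ℝ) 1) : S.ξ i * |u - v| ≤ |S.f i u - S.f i v| := by
  wlog huv : u < v generalizing u v
  · rcases (not_lt.1 huv).eq_or_lt with rfl | hvu
    · simp
    · simpa only [abs_sub_comm] using this hv hu hvu
  have hsub : Icc u v ⊆ Icc 0 1 := Icc_subset_Icc hu.1 hv.2
  obtain ⟨c, hc, hslope⟩ := exists_hasDerivAt_eq_slope (S.f i) (S.f' i) huv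
    (HasDerivAt.continuousOn fun x hx => S.hderiv i hi x (hsub hx))
    (fun x hx => S.hderiv i hi x (hsub (Ioo_subset_Icc_self hx)))
  have hfuv : S.f i v - S.f i u = S.f' i c * (v - u) := by
    rw [hslope, div_mul_cancel₀ _ (sub_ne_zero.2 huv.ne')]
  rw [abs_sub_comm (S.f i u), hfuv, abs_mul, abs_sub_comm u]
  exact mul_le_mul_of_nonneg_right (S.derivBounds i hi c (hsub (Ioo_subset_Icc_self hc))).1
    (abs_nonneg _)

theorem xiWord_mul_abs_sub_le {w : List ℕ} (hw : ∀ i ∈ w, 1 ≤ i) {u v : ℝ}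
    (hu : u ∈ Icc (0 : ℝ) 1) (hv : v ∈ Icc (0 : ℝ) 1) :
    S.xiWord w * |u - v| ≤ |S.compWord w u - S.compWord w v| := by
  induction w with
  | nil => simp
  | cons i w ih =>
    rw [List.forall_mem_cons] at hw
    calc S.xiWord (i :: w) * |u - v| = S.ξ i * (S.xiWord w * |u - v|) := by simp [mul_assoc]
      _ ≤ S.ξ i * |S.compWord w u - S.compWord w v| :=
          mul_le_mul_of_nonneg_left (ih hw.2) (S.xi_pos hw.1).le
      _ ≤ _ := S.xi_mul_abs_sub_le hw.1 (S.mapsTo_compWord hw.2 hu) (S.mapsTo_compWord hw.2 hv)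

theorem xiWord_le_abs_sub {w : List ℕ} (hw : ∀ i ∈ w, 1 ≤ i) :
    S.xiWord w ≤ |S.compWord w 1 - S.compWord w 0| := by
  simpa using S.xiWord_mul_abs_sub_le hw (right_mem_Icc.2 zero_le_one) (left_mem_Icc.2 zero_le_one)

theorem xiWord_le_one {w : List ℕ} (hw : ∀ i ∈ w, 1 ≤ i) : S.xiWord w ≤ 1 := by
  have h₁ := S.mapsTo_compWord hw (right_mem_Icc.2 zero_le_one)
  have h₀ := S.mapsTo_compWord hw (left_mem_Icc.2 zero_le_one)
  simpa using (S.xiWord_le_abs_sub hw).trans (abs_sub_le_of_le_of_le h₁.1 h₁.2 h₀.1 h₀.2)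

theorem injOn_compWord {w : List ℕ} (hw : ∀ i ∈ w, 1 ≤ i) : InjOn (S.compWord w) (Icc 0 1) :=
  fun u hu v hv huv => by
    have := S.xiWord_mul_abs_sub_le hw hu hv
    rw [huv, sub_self, abs_zero] at this
    exact sub_eq_zero.1 (abs_nonpos_iff.1 (nonpos_of_mul_nonpos_right this (S.xiWord_pos hw)))

theorem exists_image_compWord_eq_Icc {w : List ℕ} (hw : ∀ i ∈ w, 1 ≤ i) :
    ∃ α β, S.compWord w '' Icc 0 1 = Icc α β ∧ S.xiWord w ≤ β - α := by
  set K := S.compWord w '' Icc 0 1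
  have hK : IsCompact K := isCompact_Icc.image_of_continuousOn (S.continuousOn_compWord hw)
  have hKeq : K = Icc (sInf K) (sSup K) := eq_Icc_of_connected_compact
    ((isConnected_Icc zero_le_one).image _ (S.continuousOn_compWord hw)) hK
  have hmem : ∀ u ∈ Icc (0 : ℝ) 1, S.compWord w u ∈ Icc (sInf K) (sSup K) := fun u hu =>
    hKeq ▸ mem_image_of_mem _ hu
  have h₁ := hmem 1 (right_mem_Icc.2 zero_le_one)
  have h₀ := hmem 0 (left_mem_Icc.2 zero_le_one)
  exact ⟨_, _, hKeq, (S.xiWord_le_abs_sub hw).trans (abs_sub_le_of_le_of_le h₁.1 h₁.2 h₀.1 h₀.2)⟩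

theorem exists_abs_sub_compWord_le_mul_of_length_eq : ∃ m₀, 1 ≤ m₀ ∧ ∃ A, 0 ≤ A ∧ A < 1 ∧
    ∀ w : List ℕ, (∀ i ∈ w, 1 ≤ i) → w.length = m₀ → ∀ u ∈ Icc (0 : ℝ) 1, ∀ v ∈ Icc (0 : ℝ) 1,
      |S.compWord w u - S.compWord w v| ≤ A * |u - v| := by
  obtain ⟨m₀, hm₀, A, hA₀, hA₁, hderiv⟩ := S.contract
  refine ⟨m₀, hm₀, A, hA₀.le, hA₁, fun w hw hlen u hu v hv => ?_⟩
  subst hlen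
  have hF : (List.ofFn fun j => S.f (w.get j)).foldr (· ∘ ·) id = S.compWord w := by
    rw [← Function.comp_def S.f w.get, ← List.map_ofFn, List.ofFn_get]
    rfl
  have hbound := hderiv w.get (fun j => hw _ (List.get_mem w j))
  rw [hF] at hbound
  have hdiff : ∀ x ∈ Icc (0 : ℝ) 1, DifferentiableAt ℝ (S.compWord w) x := fun x hx =>
    differentiableAt_of_deriv_ne_zero (abs_pos.1 (hbound x hx).1)
  simpa only [Real.norm_eq_abs] using (convex_Icc (0 : ℝ) 1).norm_image_sub_le_of_norm_deriv_le
    hdiff (fun x hx => (hbound x hx).2) hv hu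

theorem exists_abs_sub_compWord_le : ∃ ε : ℕ → ℝ, Tendsto ε atTop (𝓝 0) ∧
    ∀ w : List ℕ, (∀ i ∈ w, 1 ≤ i) → ∀ u ∈ Icc (0 : ℝ) 1, ∀ v ∈ Icc (0 : ℝ) 1,
      |S.compWord w u - S.compWord w v| ≤ ε w.length := by
  obtain ⟨m₀, hm₀, A, hA₀, hA₁, hblock⟩ := S.exists_abs_sub_compWord_le_mul_of_length_eq
  refine ⟨fun n => A ^ (n / m₀), (tendsto_pow_atTop_nhds_zero_of_lt_one hA₀ hA₁).comp
    (Nat.tendsto_div_const_atTop (by omega)), fun w hw u hu v hv => ?_⟩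
  suffices ∀ q w, (∀ i ∈ w, 1 ≤ i) → q * m₀ ≤ w.length → ∀ u ∈ Icc (0 : ℝ) 1,
      ∀ v ∈ Icc (0 : ℝ) 1, |S.compWord w u - S.compWord w v| ≤ A ^ q from
    this _ w hw (Nat.div_mul_le_self _ _) u hu v hv
  intro q
  induction q with
  | zero =>
    intro w hw _ u hu v hv
    have h₁ := S.mapsTo_compWord hw hu
    have h₂ := S.mapsTo_compWord hw hv
    simp only [pow_zero, abs_le, mem_Icc] at h₁ h₂ ⊢
    constructor <;> linarith
  | succ q ih =>
    intro w hw hlen u hu v hv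
    rw [add_one_mul] at hlen
    have hw' : ∀ i ∈ w.take m₀ ++ w.drop m₀, 1 ≤ i := by rwa [List.take_append_drop]
    rw [List.forall_mem_append] at hw'
    have hdrop : q * m₀ ≤ (w.drop m₀).length := by
      rw [List.length_drop]
      exact Nat.le_sub_of_add_le hlen
    rw [← List.take_append_drop m₀ w, compWord_append, Function.comp_apply, Function.comp_apply,
      pow_succ']
    calc _ ≤ A * |S.compWord (w.drop m₀) u - S.compWord (w.drop m₀) v| :=
          hblock _ hw'.1 (List.length_take_of_le (by omega)) _ (S.mapsTo_compWord hw'.2 hu) _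
            (S.mapsTo_compWord hw'.2 hv)
      _ ≤ A * A ^ q := by
          gcongr
          exact ih _ hw'.2 hdrop u hu v hv

theorem xi_lt_one {i : ℕ} (hi : 1 ≤ i) : S.ξ i < 1 := by
  obtain ⟨ε, hε, hε_le⟩ := S.exists_abs_sub_compWord_le
  have hpow : ∀ n, S.ξ i ^ n ≤ ε n := fun n => by
    have hw : ∀ j ∈ List.replicate n i, 1 ≤ j := fun j hj => List.eq_of_mem_replicate hj ▸ hi
    simpa [xiWord, List.map_replicate] using (S.xiWord_le_abs_sub hw).trans
      (hε_le _ hw _ (right_mem_Icc.2 zero_le_one) _ (left_mem_Icc.2 zero_le_one))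
  by_contra! h
  obtain ⟨n, hn⟩ := (hε.eventually (gt_mem_nhds one_pos)).exists
  exact (one_le_pow₀ (n := n) h).not_gt ((hpow n).trans_lt hn)

theorem projSeq_mem_image_compWord {a : ℕ → ℕ} (ha : ∀ n, 1 ≤ a n) {n N : ℕ} (hnN : n ≤ N) :
    S.projSeq a N ∈ S.compWord ((List.range n).map a) '' Icc 0 1 := by
  obtain ⟨k, rfl⟩ := Nat.exists_eq_add_of_le hnN
  refine ⟨S.compWord ((List.range k).map fun j => a (n + j)) 1,
    S.mapsTo_compWord (List.forall_mem_map.2 fun _ _ => ha _) (right_mem_Icc.2 zero_le_one), ?_⟩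
  rw [DDecaying.projSeq, comp_eq_compWord, List.range_add, List.map_append, List.map_map,
    compWord_append]
  rfl

noncomputable def proj (a : ℕ → ℕ) : ℝ := limUnder atTop (S.projSeq a)

theorem tendsto_projSeq_proj {a : ℕ → ℕ} (ha : ∀ n, 1 ≤ a n) :
    Tendsto (S.projSeq a) atTop (𝓝 (S.proj a)) := by
  obtain ⟨ε, hε, hε_le⟩ := S.exists_abs_sub_compWord_le
  refine (cauchySeq_of_le_tendsto_0 ε (fun N₁ N₂ n h₁ h₂ => ?_) hε).tendsto_limUnder
  obtain ⟨u, hu, hu₁⟩ := S.projSeq_mem_image_compWord ha h₁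
  obtain ⟨v, hv, hv₂⟩ := S.projSeq_mem_image_compWord ha h₂
  rw [Real.dist_eq, ← hu₁, ← hv₂]
  simpa using hε_le ((List.range n).map a) (List.forall_mem_map.2 fun _ _ => ha _) u hu v hv

theorem proj_mem_image_compWord {a : ℕ → ℕ} (ha : ∀ n, 1 ≤ a n) (n : ℕ) :
    S.proj a ∈ S.compWord ((List.range n).map a) '' Icc 0 1 :=
  (isCompact_Icc.image_of_continuousOn (S.continuousOn_compWord
    (List.forall_mem_map.2 fun _ _ => ha _))).isClosed.mem_of_tendsto (S.tendsto_projSeq_proj ha)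
    (eventually_atTop.2 ⟨n, fun _ => S.projSeq_mem_image_compWord ha⟩)

theorem finite_image_inter_image {i j : ℕ} (hi : 1 ≤ i) (hj : 1 ≤ j) (hij : i ≠ j) :
    (S.f i '' Icc 0 1 ∩ S.f j '' Icc 0 1).Finite := by
  refine (Set.toFinite {S.f i 0, S.f i 1, S.f j 0, S.f j 1}).subset ?_
  rintro _ ⟨⟨u, hu, rfl⟩, v, hv, hvu⟩
  have hendpoint : ∀ {t : ℝ}, t ∈ Icc (0 : ℝ) 1 → t ∉ Ioo (0 : ℝ) 1 → t = 0 ∨ t = 1 := by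
    intro t ht ht'
    rcases ht.1.eq_or_lt with h | h
    · exact .inl h.symm
    · exact .inr (le_antisymm ht.2 (not_lt.1 fun h' => ht' ⟨h, h'⟩))
  by_cases hu' : u ∈ Ioo (0 : ℝ) 1
  · by_cases hv' : v ∈ Ioo (0 : ℝ) 1
    · exact ((S.disj i j hi hj hij).ne_of_mem (mem_image_of_mem _ hu') (mem_image_of_mem _ hv')
        hvu.symm).elim
    · rcases hendpoint hv hv' with rfl | rfl <;> simp [← hvu]
  · rcases hendpoint hu hu' with rfl | rfl <;> simp

theorem volume_image_compWord_inter_eq_zero {u v v' : List ℕ} {i j : ℕ}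
    (hw : ∀ l ∈ u ++ i :: v, 1 ≤ l) (hw' : ∀ l ∈ u ++ j :: v', 1 ≤ l) (hij : i ≠ j) :
    volume (S.compWord (u ++ i :: v) '' Icc 0 1 ∩ S.compWord (u ++ j :: v') '' Icc 0 1) = 0 := by
  simp only [List.forall_mem_append, List.forall_mem_cons] at hw hw'
  have hsub : ∀ {l : ℕ} {v : List ℕ}, 1 ≤ l → (∀ l ∈ v, 1 ≤ l) →
      S.compWord (u ++ l :: v) '' Icc 0 1 ⊆ S.compWord u '' (S.f l '' Icc 0 1) := by
    intro l v hl hv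
    rw [compWord_append, compWord_cons, image_comp, image_comp]
    exact image_mono (image_mono (S.mapsTo_compWord hv).image_subset)
  refine measure_mono_null (inter_subset_inter (hsub hw.2.1 hw.2.2) (hsub hw'.2.1 hw'.2.2)) ?_
  rw [← (S.injOn_compWord hw.1).image_inter (S.maps i hw.2.1).image_subset
    (S.maps j hw'.2.1).image_subset]
  exact ((S.finite_image_inter_image hw.2.1 hw'.2.1 hij).image _).measure_zero _

def stoppingWords (Al : Finset ℕ) (r : ℝ) : Set (List ℕ) :=
  {w | (∀ i ∈ w, i ∈ Al) ∧ S.xiWord w < r ∧ ∃ u i, w = u ++ [i] ∧ r ≤ S.xiWord u}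

variable {S} {Al : Finset ℕ} {r sm : ℝ}

theorem mul_le_xiWord_of_mem_stoppingWords (hAl : ∀ i ∈ Al, 1 ≤ i) {c : ℝ}
    (hc : ∀ i ∈ Al, c ≤ S.ξ i) (hr : 0 ≤ r) {w : List ℕ} (hw : w ∈ S.stoppingWords Al r) :
    r * c ≤ S.xiWord w := by
  obtain ⟨hwAl, -, u, i, rfl, hu⟩ := hw
  simp only [List.forall_mem_append, List.forall_mem_singleton] at hwAl
  have hi := S.xi_pos (hAl i hwAl.2)
  have hic := hc i hwAl.2
  rw [xiWord_append, show S.xiWord [i] = S.ξ i by simp [xiWord]]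
  nlinarith

theorem eq_of_prefix_of_mem_stoppingWords (hAl : ∀ i ∈ Al, 1 ≤ i) {w w' : List ℕ}
    (hw : w ∈ S.stoppingWords Al r) (hw' : w' ∈ S.stoppingWords Al r) (h : w <+: w') : w = w' := by
  by_contra hne
  obtain ⟨hwAl, hwr, -⟩ := hw
  obtain ⟨hw'Al, -, u, i, rfl, hu⟩ := hw'
  obtain ⟨v, rfl⟩ : w <+: u := (List.prefix_concat_iff.1 h).resolve_left hne
  have hv : ∀ l ∈ v, 1 ≤ l := fun l hl => hAl l (hw'Al l (by simp [hl]))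
  have := S.xiWord_le_one hv
  rw [xiWord_append] at hu
  nlinarith [S.xiWord_pos fun l hl => hAl l (hwAl l hl)]

theorem volume_inter_eq_zero_of_mem_stoppingWords (hAl : ∀ i ∈ Al, 1 ≤ i) {w w' : List ℕ}
    (hw : w ∈ S.stoppingWords Al r) (hw' : w' ∈ S.stoppingWords Al r) (hne : w ≠ w') :
    volume (S.compWord w '' Icc 0 1 ∩ S.compWord w' '' Icc 0 1) = 0 := by
  obtain ⟨u, i, j, v, v', hij, rfl, rfl⟩ := List.exists_eq_append_cons_of_not_prefix
    (fun h => hne (eq_of_prefix_of_mem_stoppingWords hAl hw hw' h))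
    (fun h => hne (eq_of_prefix_of_mem_stoppingWords hAl hw' hw h).symm)
  exact S.volume_image_compWord_inter_eq_zero (fun l hl => hAl l (hw.1 l hl))
    (fun l hl => hAl l (hw'.1 l hl)) hij

theorem exists_map_range_mem_stoppingWords (hAl : ∀ i ∈ Al, 1 ≤ i) (hr₀ : 0 < r) (hr₁ : r ≤ 1)
    {a : ℕ → ℕ} (ha : ∀ n, a n ∈ Al) : ∃ n, (List.range n).map a ∈ S.stoppingWords Al r := by
  obtain ⟨ε, hε, hε_le⟩ := S.exists_abs_sub_compWord_le
  have ha' : ∀ n, ∀ l ∈ (List.range n).map a, 1 ≤ l := fun n =>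
    List.forall_mem_map.2 fun j _ => hAl _ (ha j)
  have hex : ∃ n, S.xiWord ((List.range n).map a) < r := by
    obtain ⟨n, hn⟩ := (hε.eventually (gt_mem_nhds hr₀)).exists
    refine ⟨n, lt_of_le_of_lt ((S.xiWord_le_abs_sub (ha' n)).trans ?_) hn⟩
    simpa using hε_le _ (ha' n) 1 (right_mem_Icc.2 zero_le_one) 0 (left_mem_Icc.2 zero_le_one)
  classical
  obtain ⟨n, hn⟩ : ∃ n, Nat.find hex = n + 1 :=
    Nat.exists_eq_succ_of_ne_zero fun h => by simpa [h] using (Nat.find_spec hex).trans_le hr₁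
  refine ⟨n + 1, List.forall_mem_map.2 fun j _ => ha j, hn ▸ Nat.find_spec hex,
    (List.range n).map a, a n, ?_, not_lt.1 (Nat.find_min hex (hn ▸ n.lt_succ_self))⟩
  rw [List.range_succ, List.map_append, List.map_singleton]

theorem measure_preimage_proj_closedBall_le (hAl : ∀ i ∈ Al, 1 ≤ i) (hsm : 0 < sm) {c : ℝ}
    (hc₀ : 0 < c) (hc : ∀ i ∈ Al, c ≤ S.ξ i) (ν : Measure (ℕ → Al))
    (hν : ∀ w : List ℕ, ν {b | (List.range w.length).map (fun j => (b j : ℕ)) = w} ≤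
      ENNReal.ofReal (S.xiWord w ^ sm))
    (x : ℝ) (hr₀ : 0 < r) (hr₁ : r ≤ 1) :
    ν ((fun b : ℕ → Al => S.proj fun n => b n) ⁻¹' Metric.closedBall x r) ≤
      ENNReal.ofReal ((2 / c + 2) * r ^ sm) := by
  set W := {w ∈ S.stoppingWords Al r | (S.compWord w '' Icc 0 1 ∩ Metric.closedBall x r).Nonempty}
  set δ := r * c
  have hδ : 0 < δ := mul_pos hr₀ hc₀
  have hwAl : ∀ w ∈ W, ∀ i ∈ w, 1 ≤ i := fun w hw i hi => hAl i (hw.1.1 i hi)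
  have hcover : (fun b : ℕ → Al => S.proj fun n => b n) ⁻¹' Metric.closedBall x r ⊆
      ⋃ w ∈ W, {b | (List.range w.length).map (fun j => (b j : ℕ)) = w} := by
    intro b hb
    have ha : ∀ n, (b n : ℕ) ∈ Al := fun n => (b n).2
    obtain ⟨n, hn⟩ := exists_map_range_mem_stoppingWords hAl hr₀ hr₁ ha
    exact mem_biUnion ⟨hn, _, S.proj_mem_image_compWord (fun n => hAl _ (ha n)) n, hb⟩ (by simp)
  have hcount : ∑' _ : W, ENNReal.ofReal δ ≤ ENNReal.ofReal (2 * (r + δ)) := by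
    refine tsum_ofReal_le_of_pairwise_aedisjoint (J := fun w : W => S.compWord w '' Icc 0 1)
      hδ.le (fun w => ?_) (fun w => w.2.2) fun w w' hne =>
        volume_inter_eq_zero_of_mem_stoppingWords hAl w.2.1 w'.2.1 (Subtype.coe_injective.ne hne)
    obtain ⟨α, β, hJ, hlen⟩ := S.exists_image_compWord_eq_Icc (hwAl w w.2)
    exact ⟨α, β, hJ, (mul_le_xiWord_of_mem_stoppingWords hAl hc hr₀.le w.2.1).trans hlen⟩
  calc ν ((fun b : ℕ → Al => S.proj fun n => b n) ⁻¹' Metric.closedBall x r)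
      ≤ ∑' w : W, ν {b | (List.range (w : List ℕ).length).map (fun j => (b j : ℕ)) = w} :=
        (measure_mono hcover).trans (measure_biUnion_le ν W.to_countable _)
    _ ≤ ∑' _ : W, ENNReal.ofReal (r ^ sm / δ) * ENNReal.ofReal δ := by
        refine ENNReal.tsum_le_tsum fun w => (hν w).trans ?_
        rw [← ENNReal.ofReal_mul (by positivity), div_mul_cancel₀ _ hδ.ne']
        exact ENNReal.ofReal_le_ofReal (Real.rpow_le_rpow (S.xiWord_pos (hwAl w w.2)).le
          w.2.1.2.1.le hsm.le)
    _ = ENNReal.ofReal (r ^ sm / δ) * ∑' _ : W, ENNReal.ofReal δ := ENNReal.tsum_mul_left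
    _ ≤ ENNReal.ofReal (r ^ sm / δ) * ENNReal.ofReal (2 * (r + δ)) := by gcongr
    _ = ENNReal.ofReal ((2 / c + 2) * r ^ sm) := by
        rw [← ENNReal.ofReal_mul (by positivity)]
        congr 1
        field_simp
        ring

theorem infinitePi_cylinder_le_xiWord_rpow (hAl : ∀ i ∈ Al, 1 ≤ i)
    (hp : ∑ i : Al, ENNReal.ofReal (S.ξ i ^ sm) = 1) (w : List ℕ) :
    Measure.infinitePi (fun _ : ℕ => (PMF.ofFintype _ hp).toMeasure)
        {b | (List.range w.length).map (fun j => (b j : ℕ)) = w} ≤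
      ENNReal.ofReal (S.xiWord w ^ sm) := by
  set n := w.length
  rcases eq_empty_or_nonempty {b : ℕ → Al | (List.range n).map (fun j => (b j : ℕ)) = w}
    with hempty | ⟨a, ha⟩
  · simp [hempty]
  have hcyl : {b : ℕ → Al | (List.range n).map (fun j => (b j : ℕ)) = w} =
      {b | ∀ j < n, b j = a j} := by
    ext b
    rw [mem_ofPred_eq, ← ha, List.map_inj_left]
    simp only [List.mem_range, Subtype.coe_inj]
    rfl
  have hξ : ∀ j, 0 ≤ S.ξ (a j) := fun j => (S.xi_pos (hAl _ (a j).2)).le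
  rw [hcyl, infinitePi_setOf_forall_lt_eq]
  simp only [PMF.toMeasure_apply_singleton _ _ (measurableSet_singleton _), PMF.ofFintype_apply]
  rw [← ENNReal.ofReal_prod_of_nonneg fun j _ => Real.rpow_nonneg (hξ j) _,
    Real.finsetProd_rpow _ _ fun j _ => hξ j, ← ha, xiWord, List.map_map,
    Finset.prod_eq_multiset_prod, Finset.range_val, Multiset.range, Multiset.map_coe,
    Multiset.prod_coe]
  rfl

theorem ofReal_le_dimH_of_sum_xi_rpow_eq_one (hAl : ∀ i ∈ Al, 1 ≤ i)
    (hsm : ∑ i ∈ Al, S.ξ i ^ sm = 1) :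
    ENNReal.ofReal sm ≤
      dimH {x : ℝ | ∃ a : ℕ → ℕ, (∀ n, a n ∈ Al) ∧ Tendsto (S.projSeq a) atTop (𝓝 x)} := by
  rcases le_or_gt sm 0 with hsm₀ | hsm₀
  · simp [ENNReal.ofReal_of_nonpos hsm₀]
  have hAne : Al.Nonempty := Finset.nonempty_of_sum_ne_zero (hsm ▸ one_ne_zero)
  have hp : ∑ i : Al, ENNReal.ofReal (S.ξ i ^ sm) = 1 := by
    rw [Finset.sum_coe_sort Al (fun i => ENNReal.ofReal (S.ξ i ^ sm)),
      ← ENNReal.ofReal_sum_of_nonneg fun i hi => Real.rpow_nonneg (S.xi_pos (hAl i hi)).le _, hsm,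
      ENNReal.ofReal_one]
  have hc₀ : 0 < Al.inf' hAne S.ξ := (Finset.lt_inf'_iff hAne).2 fun i hi => S.xi_pos (hAl i hi)
  refine ofReal_le_dimH_of_measure_preimage_closedBall_le
    (Measure.infinitePi fun _ : ℕ => (PMF.ofFintype _ hp).toMeasure)
    (fun b : ℕ → Al => S.proj fun n => b n) (fun b => ?_) hsm₀ zero_lt_one (by positivity)
    fun x r hr₀ hr₁ => measure_preimage_proj_closedBall_le hAl hsm₀ hc₀
      (fun i hi => Finset.inf'_le _ hi) _ (infinitePi_cylinder_le_xiWord_rpow hAl hp) x hr₀ hr₁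
  exact ⟨_, fun n => (b n).2, S.tendsto_projSeq_proj fun n => hAl _ (b n).2⟩

theorem exists_le_sum_xi_rpow_eq_one (hAl : ∀ i ∈ Al, 1 ≤ i) {q : ℝ}
    (hq : 1 ≤ ∑ i ∈ Al, S.ξ i ^ q) : ∃ sm, q ≤ sm ∧ ∑ i ∈ Al, S.ξ i ^ sm = 1 := by
  set g : ℝ → ℝ := fun τ => ∑ i ∈ Al, S.ξ i ^ τ
  have hg : Continuous g := continuous_finsetSum _ fun i hi =>
    continuous_const.rpow continuous_id fun _ => .inl (S.xi_pos (hAl i hi)).ne'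
  have hg_lim : Tendsto g atTop (𝓝 0) := by
    simpa using tendsto_finsetSum Al fun i hi =>
      tendsto_rpow_atTop_of_base_lt_one _ (by linarith [S.xi_pos (hAl i hi)])
        (S.xi_lt_one (hAl i hi))
  obtain ⟨τ, hτ₁, hτq⟩ :=
    ((hg_lim.eventually (gt_mem_nhds one_pos)).and (eventually_ge_atTop q)).exists
  obtain ⟨sm, hsm, hgsm⟩ := intermediate_value_Icc' hτq hg.continuousOn ⟨hτ₁.le, hq⟩
  exact ⟨sm, hsm.1, hgsm⟩

theorem exists_div_natCast_le_xi_rpow {q : ℝ} (hq₀ : 0 < q) (hq : q < 1 / d) :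
    ∃ C > 0, ∀ i : ℕ, 1 ≤ i → C / i ≤ S.ξ i ^ q := by
  have hd : 0 < d := one_pos.trans S.hd
  obtain ⟨C₁, hC₁, _, _, hdecay⟩ := S.decay (1 / q - d) (by
    rw [sub_pos, lt_div_iff₀ hq₀, mul_comm, ← lt_div_iff₀ hd]
    exact hq)
  refine ⟨C₁ ^ q, Real.rpow_pos_of_pos hC₁ q, fun i hi => ?_⟩
  have hi' : (0 : ℝ) < i := by exact_mod_cast hi
  calc C₁ ^ q / i = (C₁ / (i : ℝ) ^ (d + (1 / q - d))) ^ q := by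
        rw [Real.div_rpow hC₁.le (by positivity), ← Real.rpow_mul hi'.le, add_sub_cancel,
          one_div_mul_cancel hq₀.ne', Real.rpow_one]
    _ ≤ S.ξ i ^ q := Real.rpow_le_rpow (by positivity) (hdecay i hi).1 hq₀.le

theorem not_summable_xi_rpow {q : ℝ} (hq₀ : 0 < q) (hq : q < 1 / d) :
    ¬ Summable fun i => S.ξ i ^ q := by
  obtain ⟨C, hC, hle⟩ := exists_div_natCast_le_xi_rpow (S := S) hq₀ hq
  intro hsum
  have : Summable fun j : ℕ => C / ((j + 1 : ℕ) : ℝ) :=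
    ((summable_nat_add_iff 1).2 hsum).of_nonneg_of_le (fun _ => by positivity)
      fun j => hle (j + 1) (Nat.le_add_left 1 j)
  have hsum' := (summable_nat_add_iff 1 (f := fun i : ℕ => C / (i : ℝ))).1 this
  simp_rw [div_eq_mul_one_div C] at hsum'
  exact Real.not_summable_one_div_natCast ((summable_mul_left_iff hC.ne').1 hsum')

theorem exists_one_le_sum_xi_rpow {k : ℕ} (hk : 1 ≤ k) {q : ℝ} (hq₀ : 0 < q) (hq : q < 1 / d) :
    ∃ m, 1 ≤ ∑ i ∈ Finset.Ico k m, S.ξ i ^ q := by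
  have hdiv := (not_summable_iff_tendsto_nat_atTop_of_nonneg fun j =>
    Real.rpow_nonneg (S.xi_pos (hk.trans (Nat.le_add_left k j))).le q).1
    ((summable_nat_add_iff k).not.2 (not_summable_xi_rpow hq₀ hq))
  obtain ⟨n, hn⟩ := (hdiv.eventually_ge_atTop 1).exists
  refine ⟨k + n, ?_⟩
  rw [Finset.sum_Ico_eq_sum_range, add_tsub_cancel_left]
  simpa only [add_comm k] using hn

theorem ofReal_one_div_le_dimH_attractor {k : ℕ} (hk : 1 ≤ k) :
    ENNReal.ofReal (1 / d) ≤ dimH (S.attractor k) := by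
  refine le_of_forall_lt_imp_le_of_dense fun c hc => ?_
  obtain ⟨q, -, hcq, hq⟩ := ENNReal.lt_iff_exists_real_btwn.1 hc
  have hq₀ : 0 < q := ENNReal.ofReal_pos.1 (pos_of_gt hcq)
  have hq' : q < 1 / d := (ENNReal.ofReal_lt_ofReal_iff (by have := S.hd; positivity)).1 hq
  obtain ⟨m, hm⟩ := exists_one_le_sum_xi_rpow (S := S) hk hq₀ hq'
  have hAl : ∀ i ∈ Finset.Ico k m, 1 ≤ i := fun i hi => hk.trans (Finset.mem_Ico.1 hi).1
  obtain ⟨sm, hqsm, hsm⟩ := exists_le_sum_xi_rpow_eq_one hAl hm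
  calc c ≤ ENNReal.ofReal sm := hcq.le.trans (ENNReal.ofReal_le_ofReal hqsm)
    _ ≤ _ := ofReal_le_dimH_of_sum_xi_rpow_eq_one hAl hsm
    _ ≤ dimH (S.attractor k) := dimH_mono fun x ⟨a, ha, hx⟩ =>
        ⟨a, fun n => (Finset.mem_Ico.1 (ha n)).1, hx⟩

end DDecaying

theorem dimH_attractor_lower_general (d : ℝ) (S : DDecaying d) (k m : ℕ)
    (sm : ℝ) (hsm : ∑ i ∈ Finset.Icc (k + 1) m, S.ξ i ^ sm = 1) :
    ENNReal.ofReal sm ≤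
      dimH {x : ℝ | ∃ a : ℕ → ℕ, (∀ n, a n ∈ Finset.Icc (k + 1) m) ∧
        Tendsto (S.projSeq a) atTop (𝓝 x)} ∧
    ∀ k' : ℕ, 1 ≤ k' → ENNReal.ofReal (1 / d) ≤ dimH (S.attractor k') :=
  ⟨DDecaying.ofReal_le_dimH_of_sum_xi_rpow_eq_one
      (fun _ hi => Nat.le_of_add_left_le (Finset.mem_Icc.1 hi).1) hsm,
    fun _ hk' => DDecaying.ofReal_one_div_le_dimH_attractor hk'⟩

/-- Lower bound: if `s < 1/d` and `∑_{i=k+1}^m ξ_i^s ≥ 1`, then the attractor `Λ_{k,m}` of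
the finite subsystem `{f_{k+1}, …, f_m}` has `dim_H Λ_{k,m} ≥ s_m`, where `s_m` solves
`∑_{i=k+1}^m ξ_i^{s_m} = 1`; in particular `dim_H Λ_k ≥ 1/d` for every `k ≥ 1`. -/
theorem dimH_attractor_lower (d : ℝ) (S : DDecaying d) (s : ℝ) (hs : s < 1 / d)
    (k m : ℕ) (hk : 1 ≤ k)
    (hsum : 1 ≤ ∑ i ∈ Finset.Icc (k + 1) m, S.ξ i ^ s)
    (sm : ℝ) (hsm : ∑ i ∈ Finset.Icc (k + 1) m, S.ξ i ^ sm = 1) :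
    ENNReal.ofReal sm ≤
      dimH {x : ℝ | ∃ a : ℕ → ℕ, (∀ n, a n ∈ Finset.Icc (k + 1) m) ∧
        Tendsto (S.projSeq a) atTop (𝓝 x)} ∧
    ∀ k' : ℕ, 1 ≤ k' → ENNReal.ofReal (1 / d) ≤ dimH (S.attractor k') :=
  dimH_attractor_lower_general d S k m sm hsm
end
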